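/- arXiv:1903.07421 — 2 statements merged into one kernel-verified Lean document; each statement's English description precedes it below -/
import Mathlib

section
/- Let C ≥ 1 and α > 1 be real numbers, and let (V_k)_{k≥0} be a sequence of nonnegative real numbers such that V_k ≤ C^k · V_{k−1}^α for all k ≥ 1. If V₀ < C^{−α²/(α−1)²}, then V_k converges to 0 as k → ∞. -/
/-!
Rescaling by the affine exponent `e k = k / (α - 1) + α / (α - 1) ^ 2`, chosen so that
`e (k + 1) + (k + 1) = α * e k`, turns `V k ≤ C ^ k * V (k - 1) ^ α` into the clean recursion
`W (k + 1) ≤ W k ^ α` for `W k = C ^ e k * V k`. Hence `W k ≤ W 0 ^ α ^ k`, which tends to `0`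
as soon as `W 0 < 1`; the hypothesis on `V 0` gives `W 0 < 1`, and `V k ≤ W k` because `C ≥ 1`.
-/

open Filter Topology

theorem le_rpow_pow_of_le_rpow_succ {W : ℕ → ℝ} {α : ℝ} (hW : ∀ k, 0 ≤ W k) (hα : 0 ≤ α)
    (h : ∀ k, W (k + 1) ≤ W k ^ α) (k : ℕ) : W k ≤ W 0 ^ (α ^ k) := by
  induction k with
  | zero => simp
  | succ k ih =>
    calc W (k + 1) ≤ W k ^ α := h k
      _ ≤ (W 0 ^ (α ^ k)) ^ α := Real.rpow_le_rpow (hW k) ih hα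
      _ = W 0 ^ (α ^ (k + 1)) := by rw [← Real.rpow_mul (hW 0), pow_succ]

theorem tendsto_zero_of_le_rpow_succ {W : ℕ → ℝ} {α : ℝ} (hW : ∀ k, 0 ≤ W k) (hα : 1 < α)
    (h : ∀ k, W (k + 1) ≤ W k ^ α) (h0 : W 0 < 1) : Tendsto W atTop (𝓝 0) :=
  squeeze_zero hW (le_rpow_pow_of_le_rpow_succ hW (by linarith) h)
    ((tendsto_rpow_atTop_of_base_lt_one _ (by linarith [hW 0]) h0).comp
      (tendsto_pow_atTop_atTop_of_one_lt hα))

theorem rpow_mul_le_rpow_of_le_pow_mul_rpow {C α : ℝ} (hC : 0 < C) (hα : 1 < α) {V : ℕ → ℝ}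
    (hV : ∀ k, 0 ≤ V k) (hrec : ∀ k : ℕ, V (k + 1) ≤ C ^ (k + 1) * V k ^ α) (k : ℕ) :
    C ^ ((k + 1 : ℕ) / (α - 1) + α / (α - 1) ^ 2) * V (k + 1) ≤
      (C ^ (k / (α - 1) + α / (α - 1) ^ 2) * V k) ^ α := by
  have hα1 : α - 1 ≠ 0 := by linarith
  have hexp : (k + 1 : ℕ) / (α - 1) + α / (α - 1) ^ 2 + (k + 1 : ℕ) =
      (k / (α - 1) + α / (α - 1) ^ 2) * α := by
    push_cast
    field_simp
    ring
  calc C ^ ((k + 1 : ℕ) / (α - 1) + α / (α - 1) ^ 2) * V (k + 1)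
      ≤ C ^ ((k + 1 : ℕ) / (α - 1) + α / (α - 1) ^ 2) * (C ^ (k + 1) * V k ^ α) :=
        mul_le_mul_of_nonneg_left (hrec k) (by positivity)
    _ = (C ^ (k / (α - 1) + α / (α - 1) ^ 2) * V k) ^ α := by
        rw [Real.mul_rpow (by positivity) (hV k), ← Real.rpow_mul hC.le, ← hexp,
          Real.rpow_add hC _ ((k + 1 : ℕ) : ℝ), Real.rpow_natCast]
        ring

/-- If `C ≥ 1`, `α > 1`, `(V_k)` is a nonnegative sequence with `V_k ≤ C^k V_{k-1}^α` for
all `k ≥ 1`, and `V₀ < C^{-α²/(α-1)²}`, then `V_k → 0`. -/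
theorem seq_tends_to_zero (C α : ℝ) (hC : 1 ≤ C) (hα : 1 < α) (V : ℕ → ℝ)
    (hVnn : ∀ k, 0 ≤ V k)
    (hrec : ∀ k : ℕ, 1 ≤ k → V k ≤ C ^ k * V (k - 1) ^ α)
    (hV0 : V 0 < C ^ (-(α ^ 2 / (α - 1) ^ 2))) :
    Tendsto V atTop (nhds 0) := by
  have hC0 : 0 < C := by linarith
  set W : ℕ → ℝ := fun k ↦ C ^ (k / (α - 1) + α / (α - 1) ^ 2) * V k with hW
  have hexp_nonneg (k : ℕ) : 0 ≤ k / (α - 1) + α / (α - 1) ^ 2 := by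
    have : 0 < α - 1 := by linarith
    positivity
  have hW_nonneg (k : ℕ) : 0 ≤ W k := mul_nonneg (by positivity) (hVnn k)
  have hV_le_W (k : ℕ) : V k ≤ W k :=
    le_mul_of_one_le_left (hVnn k) (Real.one_le_rpow hC (hexp_nonneg k))
  have hW_succ (k : ℕ) : W (k + 1) ≤ W k ^ α := by
    simpa [hW] using rpow_mul_le_rpow_of_le_pow_mul_rpow hC0 hα hVnn
      (fun k ↦ by simpa using hrec (k + 1) (by omega)) k
  have hW0 : W 0 < 1 := by
    have hexp : α / (α - 1) ^ 2 ≤ α ^ 2 / (α - 1) ^ 2 := by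
      gcongr
      nlinarith
    calc W 0 ≤ C ^ (α ^ 2 / (α - 1) ^ 2) * V 0 := by
          simpa [hW] using
            mul_le_mul_of_nonneg_right (Real.rpow_le_rpow_of_exponent_le hC hexp) (hVnn 0)
      _ < C ^ (α ^ 2 / (α - 1) ^ 2) * C ^ (-(α ^ 2 / (α - 1) ^ 2)) := by gcongr
      _ = 1 := by rw [← Real.rpow_add hC0, add_neg_cancel, Real.rpow_zero]
  exact squeeze_zero hVnn hV_le_W (tendsto_zero_of_le_rpow_succ hW_nonneg hα hW_succ hW0)
end

section
/- (The time intervals in the parabolic intermediate value lemma must be disjoint.) Define f on Q₂ = (−4,0)×B₂ by f(t,x) = 1 if t ≤ −1 and f(t,x) = 0 if t > −1. Then: (i) f belongs to DG⁺(γ₁,γ₂,γ₃,p) on Q₂ for every choice of γ₁,γ₂,γ₃ > 0 and 1 ≤ p ≤ (d+2)/d, and f ≤ 1 on Q_{3/2}; (ii) with Q' = (−2,0)×B₁ one has |{f ≤ 0} ∩ Q'| > 0 and |{f ≥ 1} ∩ Q'| > 0 while |{0 < f < 1} ∩ Q₂| = 0; consequently for k = 0 and l = 1 there is no constant C and exponent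 θ > 0 for which (l−k)²·|{f ≤ k} ∩ Q'|·|{f ≥ l} ∩ Q'| ≤ C·|{k < f < l} ∩ Q₂|^θ holds, i.e. the intermediate value inequality fails when the two level sets are measured over the same time interval. -/
open MeasureTheory Metric Set Filter

noncomputable section

/-- `Euc d` is `ℝ^d` with the Euclidean structure. -/
abbrev Euc (d : ℕ) := EuclideanSpace ℝ (Fin d)

/-- positive part of a real number -/
def posp (a : ℝ) : ℝ := max a 0

/-- `|∇ₓ(v - k)₊|² = 1_{v > k} |∇v|²` -/
def gradSqP {d : ℕ} (v : Euc d → ℝ) (k : ℝ) (x : Euc d) : ℝ :=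
  if k < v x then ‖gradient v x‖ ^ 2 else 0

/-- `|∇ₓ(v - k)₋|² = 1_{v < k} |∇v|²` -/
def gradSqM {d : ℕ} (v : Euc d → ℝ) (k : ℝ) (x : Euc d) : ℝ :=
  if v x < k then ‖gradient v x‖ ^ 2 else 0

/-- the parabolic cylinder `Q_r = (-r², 0) × B_r` -/
def QP (d : ℕ) (r : ℝ) : Set (ℝ × Euc d) := Ioo (-(r ^ 2)) 0 ×ˢ ball (0 : Euc d) r

/-- the earlier-time cylinder `Q̄₁ = (-2, -1) × B₁` -/
def QBar (d : ℕ) : Set (ℝ × Euc d) := Ioo (-2 : ℝ) (-1) ×ˢ ball (0 : Euc d) 1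

/-- The parabolic De Giorgi sub-class `DG⁺(γ₁,γ₂,γ₃,p)` on `Q₂ = (-4,0) × B₂`. -/
structure DGp (d : ℕ) (γ1 γ2 γ3 p : ℝ) (u : ℝ → Euc d → ℝ) : Prop where
  meas : Measurable (Function.uncurry u)
  bddL2 : ∃ M : ℝ, ∀ t ∈ Ioo (-4 : ℝ) 0, (∫ x in ball (0 : Euc d) 2, (u t x) ^ 2) ≤ M
  gradL2 : IntegrableOn (fun z : ℝ × Euc d => ‖gradient (u z.1) z.2‖ ^ 2)
      (Ioo (-4 : ℝ) 0 ×ˢ ball (0 : Euc d) 2) volume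
  energy : ∀ k s t : ℝ, -4 ≤ s → s < t → t ≤ 0 →
    ∀ r R : ℝ, 0 < r → r < R → ∀ x₀ : Euc d, ball x₀ R ⊆ ball (0 : Euc d) 2 →
      (∫ x in ball x₀ r, posp (u t x - k) ^ 2)
        + γ1 * ∫ τ in Ioo s t, ∫ x in ball x₀ r, gradSqP (u τ) k x
      ≤ (∫ x in ball x₀ R, posp (u s x - k) ^ 2)
        + γ2 / (R - r) ^ 2 * ∫ τ in Ioo s t, ∫ x in ball x₀ R, posp (u τ x - k) ^ 2
        + γ3 * (∫ τ in Ioo s t, ∫ x in ball x₀ R, posp (u τ x - k) ^ p) ^ (1 / p)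

/-- The parabolic De Giorgi super-class `DG⁻(γ₁,γ₂,γ₃,p)` on `Q₂ = (-4,0) × B₂`. -/
structure DGm (d : ℕ) (γ1 γ2 γ3 p : ℝ) (u : ℝ → Euc d → ℝ) : Prop where
  meas : Measurable (Function.uncurry u)
  bddL2 : ∃ M : ℝ, ∀ t ∈ Ioo (-4 : ℝ) 0, (∫ x in ball (0 : Euc d) 2, (u t x) ^ 2) ≤ M
  gradL2 : IntegrableOn (fun z : ℝ × Euc d => ‖gradient (u z.1) z.2‖ ^ 2)
      (Ioo (-4 : ℝ) 0 ×ˢ ball (0 : Euc d) 2) volume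
  energy : ∀ k s t : ℝ, -4 ≤ s → s < t → t ≤ 0 →
    ∀ r R : ℝ, 0 < r → r < R → ∀ x₀ : Euc d, ball x₀ R ⊆ ball (0 : Euc d) 2 →
      (∫ x in ball x₀ r, posp (k - u t x) ^ 2)
        + γ1 * ∫ τ in Ioo s t, ∫ x in ball x₀ r, gradSqM (u τ) k x
      ≤ (∫ x in ball x₀ R, posp (k - u s x) ^ 2)
        + γ2 / (R - r) ^ 2 * ∫ τ in Ioo s t, ∫ x in ball x₀ R, posp (k - u τ x) ^ 2
        + γ3 * (∫ τ in Ioo s t, ∫ x in ball x₀ R, posp (k - u τ x) ^ p) ^ (1 / p)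

/-- the `L²` norm of `u` on `Q₂` -/
def L2Q2 {d : ℕ} (u : ℝ → Euc d → ℝ) : ℝ :=
  (∫ z in QP d 2, (u z.1 z.2) ^ 2) ^ ((1 : ℝ) / 2)

/-- the counterexample: `f(t,x) = 1` for `t ≤ -1`, `f(t,x) = 0` for `t > -1` -/
def fCounter (d : ℕ) : ℝ → Euc d → ℝ := fun t _ => if t ≤ -1 then 1 else 0

/-- the cylinder `Q' = (-2,0) × B₁`, over which both level sets are measured -/
def Q' (d : ℕ) : Set (ℝ × Euc d) := Ioo (-2 : ℝ) 0 ×ˢ ball (0 : Euc d) 1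

lemma fc_grad (d : ℕ) (τ : ℝ) (x : Euc d) : gradient (fCounter d τ) x = 0 :=
  gradient_const x _

lemma posp_nonneg (a : ℝ) : 0 ≤ posp a := le_max_right a 0

lemma fc_antitone (d : ℕ) {s t : ℝ} (hst : s ≤ t) (x : Euc d) :
    fCounter d t x ≤ fCounter d s x := by
  unfold fCounter
  split_ifs with h1 h2
  · exact le_rfl
  · exact absurd (hst.trans h1) h2
  · norm_num
  · exact le_rfl

lemma fc_DGp (d : ℕ) (γ1 γ2 γ3 p : ℝ) (hγ1 : 0 < γ1) (hγ2 : 0 < γ2) (hγ3 : 0 < γ3)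
    (hp : 1 ≤ p) : DGp d γ1 γ2 γ3 p (fCounter d) := by
  constructor
  · have : Function.uncurry (fCounter d) = fun z : ℝ × Euc d => if z.1 ≤ -1 then (1:ℝ) else 0 :=
      rfl
    rw [this]
    exact Measurable.ite (measurableSet_le measurable_fst measurable_const)
      measurable_const measurable_const
  · refine ⟨(volume (ball (0 : Euc d) 2)).toReal, fun t _ => ?_⟩
    by_cases ht : t ≤ -1 <;>
      simp [fCounter, ht, setIntegral_const, ENNReal.toReal_nonneg, measureReal_def]
  · have h0 : (fun z : ℝ × Euc d => ‖gradient (fCounter d z.1) z.2‖ ^ 2)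
        = fun _ => (0 : ℝ) := by
      funext z; rw [fc_grad]; simp
    rw [h0]
    exact (integrable_zero _ _ _).integrableOn
  · intro k s t hs hst ht r R hr hrR x₀ hsub
    have hz : (∫ τ in Ioo s t, ∫ x in ball x₀ r, gradSqP (fCounter d τ) k x) = 0 := by
      simp [gradSqP, fc_grad]
    rw [hz, mul_zero, add_zero]
    have key : (∫ x in ball x₀ r, posp (fCounter d t x - k) ^ 2)
        ≤ ∫ x in ball x₀ R, posp (fCounter d s x - k) ^ 2 := by
      have e1 : (∫ x in ball x₀ r, posp (fCounter d t x - k) ^ 2)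
          = (volume (ball x₀ r)).toReal * posp ((if t ≤ -1 then (1:ℝ) else 0) - k) ^ 2 := by
        simp [fCounter, setIntegral_const, smul_eq_mul, measureReal_def]
      have e2 : (∫ x in ball x₀ R, posp (fCounter d s x - k) ^ 2)
          = (volume (ball x₀ R)).toReal * posp ((if s ≤ -1 then (1:ℝ) else 0) - k) ^ 2 := by
        simp [fCounter, setIntegral_const, smul_eq_mul, measureReal_def]
      rw [e1, e2]
      have hc : ((if t ≤ -1 then (1:ℝ) else 0) - k) ≤ ((if s ≤ -1 then (1:ℝ) else 0) - k) := by
        have := fc_antitone d hst.le (x := x₀)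
        unfold fCounter at this
        linarith
      have hps : posp ((if t ≤ -1 then (1:ℝ) else 0) - k)
          ≤ posp ((if s ≤ -1 then (1:ℝ) else 0) - k) := max_le_max hc le_rfl
      have hvol : (volume (ball x₀ r)).toReal ≤ (volume (ball x₀ R)).toReal :=
        ENNReal.toReal_mono measure_ball_lt_top.ne
          (measure_mono (ball_subset_ball hrR.le))
      exact mul_le_mul hvol (pow_le_pow_left₀ (posp_nonneg _) hps 2)
        (pow_nonneg (posp_nonneg _) 2) ENNReal.toReal_nonneg
    refine key.trans (le_add_of_nonneg_right ?_)
    refine mul_nonneg (div_nonneg hγ2.le (sq_nonneg _)) ?_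
    refine integral_nonneg fun τ => integral_nonneg fun x => ?_
    refine add_nonneg (pow_nonneg (posp_nonneg _) 2) (mul_nonneg hγ3.le ?_)
    exact Real.rpow_nonneg (integral_nonneg fun _ => integral_nonneg fun _ =>
      Real.rpow_nonneg (posp_nonneg _) p) _

lemma vol_Q'_lt_top (d : ℕ) : volume (Q' d) < ⊤ := by
  rw [Q', Measure.volume_eq_prod, Measure.prod_prod]
  exact ENNReal.mul_lt_top measure_Ioo_lt_top measure_ball_lt_top

/-- **The time intervals in the parabolic intermediate value lemma must be disjoint.**
The function `f = 1_{t ≤ -1}` belongs to every class `DG⁺(γ₁,γ₂,γ₃,p)` on `Q₂` and is `≤ 1`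
on `Q_{3/2}`, yet with `Q' = (-2,0) × B₁` both `|{f ≤ 0} ∩ Q'|` and `|{f ≥ 1} ∩ Q'|` are
positive while `|{0 < f < 1} ∩ Q₂| = 0`, so the intermediate value inequality for `k = 0`,
`l = 1` fails for every constant `C` and exponent `θ > 0` when the two level sets are
measured over the same time interval. -/
theorem counterexample_same_time_interval (d : ℕ) (hd : 1 ≤ d) :
    (∀ γ1 γ2 γ3 p : ℝ, 0 < γ1 → 0 < γ2 → 0 < γ3 → 1 ≤ p → p ≤ (d + 2) / d →
        DGp d γ1 γ2 γ3 p (fCounter d)) ∧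
    (∀ t : ℝ, ∀ x : Euc d, (t, x) ∈ QP d (3 / 2) → fCounter d t x ≤ 1) ∧
    0 < volume {z ∈ Q' d | fCounter d z.1 z.2 ≤ 0} ∧
    0 < volume {z ∈ Q' d | 1 ≤ fCounter d z.1 z.2} ∧
    volume {z ∈ QP d 2 | 0 < fCounter d z.1 z.2 ∧ fCounter d z.1 z.2 < 1} = 0 ∧
    ∀ C θ : ℝ, 0 < θ →
      ¬ ((1 - 0 : ℝ) ^ 2 * (volume {z ∈ Q' d | fCounter d z.1 z.2 ≤ 0}).toReal
            * (volume {z ∈ Q' d | 1 ≤ fCounter d z.1 z.2}).toReal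
          ≤ C * (volume {z ∈ QP d 2 | 0 < fCounter d z.1 z.2 ∧ fCounter d z.1 z.2 < 1}).toReal
              ^ θ) := by
  have hpos1 : 0 < volume {z ∈ Q' d | fCounter d z.1 z.2 ≤ 0} := by
    refine lt_of_lt_of_le ?_ (measure_mono (?_ :
        (Ioo (-1 : ℝ) 0 ×ˢ ball (0 : Euc d) 1 : Set (ℝ × Euc d)) ⊆ _))
    · refine (isOpen_Ioo.prod isOpen_ball).measure_pos volume ?_
      exact ⟨((-1/2 : ℝ), (0 : Euc d)),
        ⟨by constructor <;> norm_num, mem_ball_self one_pos⟩⟩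
    · rintro ⟨t, x⟩ ⟨⟨h1, h2⟩, hx⟩
      refine ⟨⟨⟨by linarith, h2⟩, hx⟩, ?_⟩
      simp only [fCounter]
      rw [if_neg (by linarith : ¬ t ≤ -1)]
  have hpos2 : 0 < volume {z ∈ Q' d | 1 ≤ fCounter d z.1 z.2} := by
    refine lt_of_lt_of_le ?_ (measure_mono (?_ :
        (Ioo (-2 : ℝ) (-1) ×ˢ ball (0 : Euc d) 1 : Set (ℝ × Euc d)) ⊆ _))
    · refine (isOpen_Ioo.prod isOpen_ball).measure_pos volume ?_
      exact ⟨((-3/2 : ℝ), (0 : Euc d)),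
        ⟨by constructor <;> norm_num, mem_ball_self one_pos⟩⟩
    · rintro ⟨t, x⟩ ⟨⟨h1, h2⟩, hx⟩
      refine ⟨⟨⟨h1, by linarith⟩, hx⟩, ?_⟩
      simp only [fCounter]
      rw [if_pos (by linarith : t ≤ -1)]
  have hempty : {z ∈ QP d 2 | 0 < fCounter d z.1 z.2 ∧ fCounter d z.1 z.2 < 1} = ∅ := by
    ext z
    simp only [mem_setOf_eq, mem_empty_iff_false, iff_false, not_and]
    rintro - h1 h2
    by_cases h : z.1 ≤ -1 <;> simp [fCounter, h] at h1 h2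
  refine ⟨fun γ1 γ2 γ3 p h1 h2 h3 hp _ => fc_DGp d γ1 γ2 γ3 p h1 h2 h3 hp,
    fun t x _ => ?_, hpos1, hpos2, by rw [hempty]; exact measure_empty, ?_⟩
  · unfold fCounter; split_ifs <;> norm_num
  · intro C θ hθ hineq
    rw [hempty] at hineq
    simp only [measure_empty, ENNReal.toReal_zero] at hineq
    rw [Real.zero_rpow hθ.ne'] at hineq
    have ha : 0 < (volume {z ∈ Q' d | fCounter d z.1 z.2 ≤ 0}).toReal :=
      ENNReal.toReal_pos hpos1.ne'
        ((lt_of_le_of_lt (measure_mono (sep_subset _ _)) (vol_Q'_lt_top d)).ne)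
    have hb : 0 < (volume {z ∈ Q' d | 1 ≤ fCounter d z.1 z.2}).toReal :=
      ENNReal.toReal_pos hpos2.ne'
        ((lt_of_le_of_lt (measure_mono (sep_subset _ _)) (vol_Q'_lt_top d)).ne)
    nlinarith [mul_pos ha hb]
end
end
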